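/- arXiv:1505.02322 — 5 statements merged into one kernel-verified Lean document; each statement's English description precedes it below -/
import Mathlib

section
/- Let G = (V,E) and G' = (V',E') be simple undirected graphs, let f and f' be inputs for G and G' respectively, and let p and p' be port numberings of G and G' respectively. If (G,f,v,p) and (G',f',v',p') are r-SV-bisimilar for some r ∈ ℕ, v ∈ V and v' ∈ V', then for every distributed state machine A in class SV, the states of v and v' in the executions of A in (G,f,p) and (G',f',p') satisfy x_t(v) = x'_t(v') for all t = 0,1,...,r. -/
/-!
Induction on the round. Bisimilar nodes start in the same state, since they
have the same degree and input. In round `t + 1` the two nodes are, by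
induction, in the same state, so it suffices that they receive the same *set*
of messages. A message reaching `v` comes from a neighbour `u` through an
output port `j`; condition (B2) provides a neighbour `u'` of `v'` that is
`t`-bisimilar to `u` and reaches `v'` through the same output port number, and
`j` is that port because a node has only one port towards each neighbour.
Hence `u'` sends `v'` the same message; (B3) gives the converse inclusion.
-/

namespace Paper

/-- The degree of a vertex: the number of its neighbours. -/
noncomputable def deg {V : Type} (G : SimpleGraph V) (v : V) : ℕ :=
  {u | G.Adj v u}.ncard

/-- A port numbering of a graph, modelled as a partial map sending each
output port `(v, i)` with `1 ≤ i ≤ deg v` to an input port `(u, j)` of an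
adjacent node `u`, bijectively, such that there is a port between `v` and `u`
if and only if they are adjacent. -/
structure IsPortNumbering {V : Type} (G : SimpleGraph V)
    (pn : V → ℕ → Option (V × ℕ)) : Prop where
  dom : ∀ v i, (pn v i).isSome ↔ 1 ≤ i ∧ i ≤ deg G v
  adj : ∀ v i u j, pn v i = some (u, j) → G.Adj v u ∧ 1 ≤ j ∧ j ≤ deg G u
  bij : ∀ u j, 1 ≤ j → j ≤ deg G u → ∃! vi : V × ℕ, pn vi.1 vi.2 = some (u, j)
  edge : ∀ v u, G.Adj v u ↔ ∃ i j, pn v i = some (u, j)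

/-- A generalised port numbering with port numbers from an arbitrary set `N`:
each node `v` has a set of `deg v` output port numbers (those `o` with
`pn v o ≠ none`) and a set of `deg v` input port numbers (those `i` received
from some output port), and `pn` is a bijection from output ports to input
ports of adjacent nodes. -/
structure IsGenPortNumbering {V N : Type} (G : SimpleGraph V)
    (pn : V → N → Option (V × N)) : Prop where
  adj : ∀ v o u i, pn v o = some (u, i) → G.Adj v u
  edge : ∀ v u, G.Adj v u → ∃ o i, pn v o = some (u, i)
  inj : ∀ v o v' o' u i, pn v o = some (u, i) → pn v' o' = some (u, i) →
    v = v' ∧ o = o'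
  out_card : ∀ v, {o | (pn v o).isSome}.ncard = deg G v
  in_card : ∀ u, {i | ∃ v o, pn v o = some (u, i)}.ncard = deg G u

/-- `r`-SV-bisimilarity of `(G, f, v, p)` and `(G', f', v', p')`. -/
def SVBisim {V V' X N : Type} (G : SimpleGraph V) (G' : SimpleGraph V')
    (f : V → X) (f' : V' → X)
    (p : V → N → Option (V × N)) (p' : V' → N → Option (V' × N)) :
    ℕ → V → V' → Prop
  | 0, v, v' => deg G v = deg G' v' ∧ f v = f' v'
  | r + 1, v, v' =>
      (deg G v = deg G' v' ∧ f v = f' v') ∧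
      (∀ w, G.Adj v w → ∃ w', G'.Adj v' w' ∧
        SVBisim G G' f f' p p' r w w' ∧
        ∃ a b c, p w a = some (v, b) ∧ p' w' a = some (v', c)) ∧
      (∀ w', G'.Adj v' w' → ∃ w, G.Adj v w ∧
        SVBisim G G' f f' p p' r w w' ∧
        ∃ a b c, p w a = some (v, b) ∧ p' w' a = some (v', c))

/-- A distributed state machine for `(F(Δ), X)`: a set of states `Y`,
a finite set `Z` of stopping states, an initialisation function, a message
set `M` with a special symbol `eps` ("no message"), a message-construction
function `msg` and a transition function `trans`. -/
structure DSM (Δ : ℕ) (X : Type) where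
  Y : Type
  Z : Set Y
  Zfin : Z.Finite
  init : ℕ → X → Y
  M : Type
  eps : M
  msg : Y → ℕ → M
  trans : Y → (Fin Δ → M) → Y
  halt_msg : ∀ z ∈ Z, ∀ i, msg z i = eps
  halt_trans : ∀ z ∈ Z, ∀ m, trans z m = z

/-- Class `SV`: the state transitions are invariant under the set of the
received message vector. -/
def DSM.InSV {Δ : ℕ} {X : Type} (A : DSM Δ X) : Prop :=
  ∀ (y : A.Y) (a b : Fin Δ → A.M),
    Set.range a = Set.range b → A.trans y a = A.trans y b

/-- Class `MV`: the state transitions are invariant under the multiset of the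
received message vector. -/
def DSM.InMV {Δ : ℕ} {X : Type} (A : DSM Δ X) : Prop :=
  ∀ (y : A.Y) (a b : Fin Δ → A.M),
    (↑(List.ofFn a) : Multiset A.M) = ↑(List.ofFn b) →
      A.trans y a = A.trans y b

open Classical in
/-- The message received by node `v` through its input port `i + 1` when the
nodes are in states `x`: if the port numbering connects some output port
`(u, j)` to `(v, i + 1)`, it is `msg (x u) j`, and otherwise the padding
symbol `eps`. -/
noncomputable def recv {V X : Type} {Δ : ℕ} (A : DSM Δ X)
    (pn : V → ℕ → Option (V × ℕ)) (x : V → A.Y) (v : V) (i : Fin Δ) : A.M :=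
  if h : ∃ uj : V × ℕ, pn uj.1 uj.2 = some (v, (i : ℕ) + 1) then
    A.msg (x h.choose.1) h.choose.2
  else A.eps

/-- `run A G f pn r v` is the state of node `v` in round `r` of the execution
of `A` in `(G, f, pn)`. -/
noncomputable def run {V X : Type} {Δ : ℕ} (A : DSM Δ X) (G : SimpleGraph V)
    (f : V → X) (pn : V → ℕ → Option (V × ℕ)) : ℕ → V → A.Y
  | 0, v => A.init (deg G v) (f v)
  | r + 1, v => A.trans (run A G f pn r v) (fun i => recv A pn (run A G f pn r) v i)

namespace IsPortNumbering

variable {V : Type} {G : SimpleGraph V} {p : V → ℕ → Option (V × ℕ)}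

-- The ports `1, …, deg u` are mapped onto the `deg u` neighbours of `u`, hence injectively.
theorem out_port_eq (hp : IsPortNumbering G p) {u v : V} {a a' i i' : ℕ}
    (ha : p u a = some (v, i)) (ha' : p u a' = some (v, i')) : a = a' := by
  set target : ℕ → V := fun k => ((p u k).getD (u, 0)).1
  have mem_ports {k : ℕ} {w : V} {j : ℕ} (hk : p u k = some (w, j)) :
      k ∈ Set.Icc 1 (deg G u) := hp.dom u k |>.1 (by simp [hk])
  have image_ports : target '' Set.Icc 1 (deg G u) = {w | G.Adj u w} := by
    ext w
    constructor
    · rintro ⟨k, hk, rfl⟩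
      obtain ⟨⟨w, j⟩, hw⟩ := Option.isSome_iff_exists.mp ((hp.dom u k).2 hk)
      simpa [target, hw] using (hp.adj u k w j hw).1
    · intro hw
      obtain ⟨k, j, hk⟩ := (hp.edge u w).1 hw
      exact ⟨k, mem_ports hk, by simp [target, hk]⟩
  have hinj : Set.InjOn target (Set.Icc 1 (deg G u)) :=
    Set.injOn_of_ncard_image_eq (by rw [image_ports, Set.ncard_Icc_nat]; rfl)
  exact hinj (mem_ports ha) (mem_ports ha') (by simp [target, ha, ha'])

end IsPortNumbering

section Execution

variable {V X : Type} {Δ : ℕ} {A : DSM Δ X} {G : SimpleGraph V}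
  {p : V → ℕ → Option (V × ℕ)}

theorem recv_eq_msg (hp : IsPortNumbering G p) (x : V → A.Y) {u v : V} {j : ℕ}
    {i : Fin Δ} (h : p u j = some (v, (i : ℕ) + 1)) :
    recv A p x v i = A.msg (x u) j := by
  have hex : ∃ uj : V × ℕ, p uj.1 uj.2 = some (v, (i : ℕ) + 1) := ⟨(u, j), h⟩
  obtain ⟨-, -, hi⟩ := hp.adj u j v _ h
  obtain ⟨_, -, huniq⟩ := hp.bij v _ (Nat.le_add_left 1 i) hi
  rw [recv, dif_pos hex, huniq _ hex.choose_spec, ← huniq (u, j) h]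

theorem recv_eq_eps (hp : IsPortNumbering G p) (x : V → A.Y) {v : V} {i : Fin Δ}
    (h : deg G v < (i : ℕ) + 1) : recv A p x v i = A.eps := by
  rw [recv, dif_neg]
  rintro ⟨⟨u, j⟩, hu⟩
  exact h.not_ge (hp.adj u j v _ hu).2.2

variable {V' : Type} {G' : SimpleGraph V'} {p' : V' → ℕ → Option (V' × ℕ)}

theorem range_recv_subset (hp : IsPortNumbering G p) (hp' : IsPortNumbering G' p')
    (R : V → V' → Prop) {x : V → A.Y} {x' : V' → A.Y}
    (hx : ∀ w w', R w w' → x w = x' w') {v : V} {v' : V'}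
    (hΔ : deg G' v' ≤ Δ) (hdeg : deg G v = deg G' v')
    (hforth : ∀ w, G.Adj v w → ∃ w', R w w' ∧
      ∃ a b c, p w a = some (v, b) ∧ p' w' a = some (v', c)) :
    Set.range (recv A p x v) ⊆ Set.range (recv A p' x' v') := by
  rintro _ ⟨i, rfl⟩
  by_cases hi : (i : ℕ) + 1 ≤ deg G v
  · obtain ⟨⟨u, j⟩, hu, -⟩ := hp.bij v _ (Nat.le_add_left 1 i) hi
    obtain ⟨u', hR, a, b, c, hua, hu'a⟩ := hforth u (hp.adj u j v _ hu).1.symm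
    obtain rfl := hp.out_port_eq hua hu
    obtain ⟨-, hc, hcv'⟩ := hp'.adj u' a v' c hu'a
    have hu'a : p' u' a = some (v', ((⟨c - 1, by omega⟩ : Fin Δ) : ℕ) + 1) := by
      rwa [Nat.sub_add_cancel hc]
    exact ⟨_, by rw [recv_eq_msg hp' _ hu'a, recv_eq_msg hp _ hu, hx u u' hR]⟩
  · exact ⟨i, by rw [recv_eq_eps hp' _ (by omega), recv_eq_eps hp _ (by omega)]⟩

end Execution

namespace SVBisim

variable {V V' X N : Type} {G : SimpleGraph V} {G' : SimpleGraph V'}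
  {f : V → X} {f' : V' → X} {p : V → N → Option (V × N)} {p' : V' → N → Option (V' × N)}

theorem of_succ {r : ℕ} {v : V} {v' : V'} (h : SVBisim G G' f f' p p' (r + 1) v v') :
    SVBisim G G' f f' p p' r v v' := by
  induction r generalizing v v' with
  | zero => exact h.1
  | succ r ih =>
    obtain ⟨h0, hforth, hback⟩ := h
    exact ⟨h0, fun w hw => (hforth w hw).imp fun _ ⟨hw', hb, hport⟩ => ⟨hw', ih hb, hport⟩,
      fun w' hw' => (hback w' hw').imp fun _ ⟨hw, hb, hport⟩ => ⟨hw, ih hb, hport⟩⟩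

theorem mono {r t : ℕ} (hle : t ≤ r) {v : V} {v' : V'}
    (h : SVBisim G G' f f' p p' r v v') : SVBisim G G' f f' p p' t v v' := by
  induction hle with
  | refl => exact h
  | step _ ih => exact ih h.of_succ

end SVBisim

theorem run_eq_of_SVBisim {V V' X : Type} {Δ : ℕ} {A : DSM Δ X}
    {G : SimpleGraph V} {G' : SimpleGraph V'} {f : V → X} {f' : V' → X}
    {p : V → ℕ → Option (V × ℕ)} {p' : V' → ℕ → Option (V' × ℕ)}
    (hG : ∀ v, deg G v ≤ Δ) (hG' : ∀ v', deg G' v' ≤ Δ)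
    (hp : IsPortNumbering G p) (hp' : IsPortNumbering G' p') (hA : A.InSV)
    {t : ℕ} {v : V} {v' : V'} (h : SVBisim G G' f f' p p' t v v') :
    run A G f p t v = run A G' f' p' t v' := by
  induction t generalizing v v' with
  | zero => simp only [run, h.1, h.2]
  | succ t ih =>
    rw [run, run, ih h.of_succ]
    obtain ⟨⟨hdeg, -⟩, hforth, hback⟩ := h
    have forth := range_recv_subset hp hp' _ (fun w w' hb => ih hb) (hG' v') hdeg
      fun w hw => (hforth w hw).imp fun _ ⟨_, hb, hport⟩ => ⟨hb, hport⟩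
    have back := range_recv_subset hp' hp (fun w' w => SVBisim G G' f f' p p' t w w')
      (fun w' w hb => (ih hb).symm) (hG v) hdeg.symm
      fun w' hw' => (hback w' hw').imp fun _ ⟨_, hb, a, b, c, hpa, hp'a⟩ => ⟨hb, a, c, b, hp'a, hpa⟩
    exact hA _ _ _ (forth.antisymm back)

theorem states_eq_of_SVBisim_general {V V' X : Type} (Δ : ℕ)
    (G : SimpleGraph V) (G' : SimpleGraph V')
    (f : V → X) (f' : V' → X)
    (p : V → ℕ → Option (V × ℕ)) (p' : V' → ℕ → Option (V' × ℕ))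
    (hG : ∀ v, deg G v ≤ Δ) (hG' : ∀ v', deg G' v' ≤ Δ)
    (hp : IsPortNumbering G p) (hp' : IsPortNumbering G' p')
    (r : ℕ) (v : V) (v' : V')
    (hbisim : SVBisim G G' f f' p p' r v v')
    (A : DSM Δ X) (hA : A.InSV) :
    ∀ t ≤ r, run A G f p t v = run A G' f' p' t v' :=
  fun _ ht => run_eq_of_SVBisim hG hG' hp hp' hA (hbisim.mono ht)

/-- If `(G, f, v, p)` and `(G', f', v', p')` are `r`-SV-bisimilar, then for
every distributed state machine `A` in class `SV`, the states of `v` and `v'`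
in the executions of `A` in `(G, f, p)` and `(G', f', p')` are identical in
rounds `0, 1, …, r`. -/
theorem states_eq_of_SVBisim {V V' X : Type} [Finite X] (Δ : ℕ)
    (G : SimpleGraph V) (G' : SimpleGraph V')
    (f : V → X) (f' : V' → X)
    (p : V → ℕ → Option (V × ℕ)) (p' : V' → ℕ → Option (V' × ℕ))
    (hG : ∀ v, deg G v ≤ Δ) (hG' : ∀ v', deg G' v' ≤ Δ)
    (hp : IsPortNumbering G p) (hp' : IsPortNumbering G' p')
    (r : ℕ) (v : V) (v' : V')
    (hbisim : SVBisim G G' f f' p p' r v v')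
    (A : DSM Δ X) (hA : A.InSV) :
    ∀ t ≤ r, run A G f p t v = run A G' f' p' t v' :=
  states_eq_of_SVBisim_general Δ G G' f f' p p' hG hG' hp hp' r v v' hbisim A hA

end Paper
end

section
/- Let G = (V,E) and G' = (V',E') be graphs, let f and f' be inputs for G and G' respectively, and let p and p' be generalised port numberings of G and G' respectively, with port numbers taken from a set N. Suppose q and q' are port numberings of G and G' respectively such that, for some function g : N → ℕ₊, p(v,i) = (u,j) implies q(v,g(i)) = (u,g(j)) and p'(v,i) = (u,j) implies q'(v,g(i)) = (u,g(j)). Then (G,f,v,p) ≡_r (G',f',v',p') implies (G,f,v,q) ≡_r (G',f',v',q') for all v ∈ V, v' ∈ V' and r ∈ ℕ. -/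
namespace Paper

theorem SVBisim.of_portMap {V V' X N M : Type}
    {G : SimpleGraph V} {G' : SimpleGraph V'} {f : V → X} {f' : V' → X}
    {p : V → N → Option (V × N)} {p' : V' → N → Option (V' × N)}
    {q : V → M → Option (V × M)} {q' : V' → M → Option (V' × M)}
    (g : N → M)
    (hpq : ∀ v i u j, p v i = some (u, j) → q v (g i) = some (u, g j))
    (hpq' : ∀ v i u j, p' v i = some (u, j) → q' v (g i) = some (u, g j)) :
    ∀ {r : ℕ} {v : V} {v' : V'},
      SVBisim G G' f f' p p' r v v' → SVBisim G G' f f' q q' r v v'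
  | 0, _, _, h => h
  | r + 1, v, v', ⟨hdeg, hfwd, hbwd⟩ => by
    have ports : ∀ w w', (∃ a b c, p w a = some (v, b) ∧ p' w' a = some (v', c)) →
        ∃ a b c, q w a = some (v, b) ∧ q' w' a = some (v', c) := by
      rintro w w' ⟨a, b, c, hpa, hpa'⟩
      exact ⟨g a, g b, g c, hpq _ _ _ _ hpa, hpq' _ _ _ _ hpa'⟩
    refine ⟨hdeg, fun w hw => ?_, fun w' hw' => ?_⟩
    · obtain ⟨w', hw', hbisim, hports⟩ := hfwd w hw
      exact ⟨w', hw', of_portMap g hpq hpq' hbisim, ports w w' hports⟩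
    · obtain ⟨w, hw, hbisim, hports⟩ := hbwd w' hw'
      exact ⟨w, hw, of_portMap g hpq hpq' hbisim, ports w w' hports⟩

theorem SVBisim_of_portChange_general {V V' X N : Type}
    (G : SimpleGraph V) (G' : SimpleGraph V')
    (f : V → X) (f' : V' → X)
    (p : V → N → Option (V × N)) (p' : V' → N → Option (V' × N))
    (q : V → ℕ → Option (V × ℕ)) (q' : V' → ℕ → Option (V' × ℕ))
    (g : N → ℕ)
    (hpq : ∀ v i u j, p v i = some (u, j) → q v (g i) = some (u, g j))
    (hpq' : ∀ v i u j, p' v i = some (u, j) → q' v (g i) = some (u, g j)) :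
    ∀ (r : ℕ) (v : V) (v' : V'),
      SVBisim G G' f f' p p' r v v' → SVBisim G G' f f' q q' r v v' :=
  fun _ _ _ => SVBisim.of_portMap g hpq hpq'

/-- If the port numberings `q`, `q'` are obtained from the generalised port
numberings `p`, `p'` via a renaming `g` of port numbers, then
`r`-SV-bisimilarity with respect to `p`, `p'` implies `r`-SV-bisimilarity
with respect to `q`, `q'`. -/
theorem SVBisim_of_portChange {V V' X N : Type}
    (G : SimpleGraph V) (G' : SimpleGraph V')
    (f : V → X) (f' : V' → X)
    (p : V → N → Option (V × N)) (p' : V' → N → Option (V' × N))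
    (hp : IsGenPortNumbering G p) (hp' : IsGenPortNumbering G' p')
    (q : V → ℕ → Option (V × ℕ)) (q' : V' → ℕ → Option (V' × ℕ))
    (hq : IsPortNumbering G q) (hq' : IsPortNumbering G' q')
    (g : N → ℕ) (hg : ∀ x, 0 < g x)
    (hpq : ∀ v i u j, p v i = some (u, j) → q v (g i) = some (u, g j))
    (hpq' : ∀ v i u j, p' v i = some (u, j) → q' v (g i) = some (u, g j)) :
    ∀ (r : ℕ) (v : V) (v' : V'),
      SVBisim G G' f f' p p' r v v' → SVBisim G G' f f' q q' r v v' :=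
  SVBisim_of_portChange_general G G' f f' p p' q q' g hpq hpq'

end Paper
end

section
/- For each d ≥ 2, every node v ∈ V_d of the graph G_d and every a ∈ {0,1,...,d}, there is at most one node u ∈ V_d such that {v,u} ∈ E_d and π_d(u,v) = a. -/
namespace Paper

/-- Nodes of the tree `G_d` are finite sequences of pairs of numbers.
We represent a sequence `(a₁, …, a_i)` as the list `[a_i, …, a₁]`, i.e. in
reverse order, so that consing corresponds to appending a pair at the end. -/
abbrev Nd : Type := ℕ × ℕ

/-- `b₂⁺`: `1` if `b₂ = 0`, and `b₂` otherwise. -/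
def bplus (b : ℕ) : ℕ := if b = 0 then 1 else b

/-- For `j ≥ 1`, the `j`-th smallest element of `{lo, lo+1, lo+2, …} \ {f}`.
This realises the greedy choices `c^j = min({lo,…} \ {f, c¹, …, c^{j-1}})`. -/
def nthAvoid (lo f j : ℕ) : ℕ :=
  if lo + j - 1 < f ∨ f < lo then lo + j - 1 else lo + j

/-- The node set `V_d` of the graph `G_d`, given by the rules (G1)–(G4).
(Sequences are represented as reversed lists, the head being the last pair
`a_i` of the sequence.) -/
inductive Vd (d : ℕ) : List Nd → Prop
  /-- (G1): the empty sequence is a node. -/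
  | nil : Vd d []
  /-- (G2): the sequences `((1,0)), ((2,1)), …, ((d,d−1))` are nodes. -/
  | base (k : ℕ) (h1 : 1 ≤ k) (h2 : k ≤ d) : Vd d [(k, k - 1)]
  /-- (G3): children of a node of odd length `< 2d` with last pair `(b₁, b₂)`:
  for `j = 1, …, d−1` append `(c₁ʲ, c₂ʲ)` where `c₁ʲ` is the `j`-th smallest
  element of `{1,…,d} \ {b₂⁺}` and `c₂ʲ` the `j`-th smallest of `{1,…,d} \ {b₁}`. -/
  | odd (b₁ b₂ : ℕ) (rest : List Nd)
      (hv : Vd d ((b₁, b₂) :: rest))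
      (hodd : Odd ((b₁, b₂) :: rest).length)
      (hlt : ((b₁, b₂) :: rest).length < 2 * d)
      (j : ℕ) (hj1 : 1 ≤ j) (hj2 : j ≤ d - 1) :
      Vd d ((nthAvoid 1 (bplus b₂) j, nthAvoid 1 b₁ j) :: (b₁, b₂) :: rest)
  /-- (G4): children of a node of even positive length `< 2d` with last pair
  `(b₁, b₂)`: for `j = 1, …, d−1` append `(c₁ʲ, c₂ʲ)` where `c₁ʲ` is the `j`-th
  smallest element of `{1,…,d} \ {b₂}` and `c₂ʲ` the `j`-th smallest of
  `{0,…,d−1} \ {b₁}`. -/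
  | even (b₁ b₂ : ℕ) (rest : List Nd)
      (hv : Vd d ((b₁, b₂) :: rest))
      (heven : Even ((b₁, b₂) :: rest).length)
      (hlt : ((b₁, b₂) :: rest).length < 2 * d)
      (j : ℕ) (hj1 : 1 ≤ j) (hj2 : j ≤ d - 1) :
      Vd d ((nthAvoid 1 b₂ j, nthAvoid 0 b₁ j) :: (b₁, b₂) :: rest)

/-- The edge relation of `G_d`: `u` is a child of `v` or vice versa. -/
def Ed (d : ℕ) (v u : List Nd) : Prop :=
  Vd d v ∧ Vd d u ∧ ∃ a : Nd, u = a :: v ∨ v = a :: u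

/-- The outgoing port number `π_d(v, u)` from `v` towards an adjacent node `u`:
if `u = (b₁, b₂) :: v` is a child of `v` then `b₁`, and if `v = (b₁, b₂) :: u`
is a child of `u` then `b₂`. -/
def outPort (v u : List Nd) : ℕ :=
  if u.length = v.length + 1 then u.headI.1 else v.headI.2

/-- A pair of compatible walks (PCW) of length `k` in `G_d`:
two walks starting at `((1,0))` and `((2,1))` such that the outgoing port
numbers backwards along the walks coincide. -/
structure IsPCW (d k : ℕ) (w₁ w₂ : ℕ → List Nd) : Prop where
  klen : k ≤ 2 * d - 3
  walk₁ : ∀ j < k, Ed d (w₁ j) (w₁ (j + 1))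
  walk₂ : ∀ j < k, Ed d (w₂ j) (w₂ (j + 1))
  start₁ : w₁ 0 = [(1, 0)]
  start₂ : w₂ 0 = [(2, 1)]
  compat : ∀ j, 1 ≤ j → j ≤ k →
    outPort (w₁ j) (w₁ (j - 1)) = outPort (w₂ j) (w₂ (j - 1))

/-- A pair of separating walks (PSW): a PCW such that the last node of the
first walk has a neighbour whose outgoing port number towards it is matched
by no neighbour of the last node of the second walk. -/
structure IsPSW (d k : ℕ) (w₁ w₂ : ℕ → List Nd)
    extends IsPCW d k w₁ w₂ : Prop where
  sep : ∃ x, Ed d (w₁ k) x ∧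
    ∀ y, Ed d (w₂ k) y → outPort x (w₁ k) ≠ outPort y (w₂ k)

/-- A PSW of length `k` in `G_d` is critical if there is no strictly shorter
PSW in `G_d`. -/
def IsCriticalPSW (d k : ℕ) (w₁ w₂ : ℕ → List Nd) : Prop :=
  IsPSW d k w₁ w₂ ∧ ∀ k' w₁' w₂', IsPSW d k' w₁' w₂' → k ≤ k'

/-!
A neighbour of `v` is either its parent or a child `p :: v`. The port from a child towards
`v` is the second coordinate `c₂ʲ` of the appended pair; it determines `j`, since the greedy
choices are injective in `j`, and it avoids `b₁`, the port from `v` towards its own parent.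
-/

lemma nthAvoid_inj {lo f j j' : ℕ} (hj : 1 ≤ j) (hj' : 1 ≤ j') :
    nthAvoid lo f j = nthAvoid lo f j' ↔ j = j' := by
  refine ⟨fun h => ?_, congrArg _⟩
  unfold nthAvoid at h
  split_ifs at h <;> omega

lemma nthAvoid_ne {lo f j : ℕ} (hj : 1 ≤ j) : nthAvoid lo f j ≠ f := by
  unfold nthAvoid
  split_ifs <;> omega

@[simp]
lemma outPort_cons_self (p : Nd) (v : List Nd) : outPort (p :: v) v = p.2 := by
  rw [outPort, if_neg (by simp only [List.length_cons]; omega)]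
  rfl

@[simp]
lemma outPort_self_cons (v : List Nd) (p : Nd) : outPort v (p :: v) = p.1 := by
  simp [outPort]

namespace Vd

variable {d : ℕ}

lemma eq_of_snd_eq {p p' : Nd} {v : List Nd} (h : Vd d (p :: v)) (h' : Vd d (p' :: v))
    (hp : p.2 = p'.2) : p = p' := by
  cases h with
  | base k hk _ =>
    cases h' with
    | base k' hk' _ => simp only [Prod.mk.injEq] at hp ⊢; omega
  | odd b₁ b₂ rest _ hodd _ j hj =>
    cases h' with
    | odd _ _ _ _ _ _ j' hj' => rw [(nthAvoid_inj hj hj').1 hp]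
    | even _ _ _ _ heven => exact absurd hodd (Nat.not_odd_iff_even.2 heven)
  | even b₁ b₂ rest _ heven _ j hj =>
    cases h' with
    | odd _ _ _ _ hodd => exact absurd hodd (Nat.not_odd_iff_even.2 heven)
    | even _ _ _ _ _ _ j' hj' => rw [(nthAvoid_inj hj hj').1 hp]

lemma snd_ne_fst {p b : Nd} {rest : List Nd} (h : Vd d (p :: b :: rest)) : p.2 ≠ b.1 := by
  cases h with
  | odd _ _ _ _ _ _ _ hj => exact nthAvoid_ne hj
  | even _ _ _ _ _ _ _ hj => exact nthAvoid_ne hj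

end Vd

theorem Gd_port_unique_general (d : ℕ) (v : List Nd) (a : ℕ) (u u' : List Nd)
    (hu : Ed d v u) (hu' : Ed d v u')
    (hπ : outPort u v = a) (hπ' : outPort u' v = a) :
    u = u' := by
  have hport : outPort u v = outPort u' v := hπ.trans hπ'.symm
  obtain ⟨-, hvu, p, rfl | rfl⟩ := hu <;> obtain ⟨-, hvu', p', rfl | hv⟩ := hu'
  · simp only [outPort_cons_self] at hport
    rw [hvu.eq_of_snd_eq hvu' hport]
  · subst hv
    simp only [outPort_cons_self, outPort_self_cons] at hport
    exact absurd hport hvu.snd_ne_fst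
  · simp only [outPort_cons_self, outPort_self_cons] at hport
    exact absurd hport.symm hvu'.snd_ne_fst
  · exact (List.cons_eq_cons.1 hv).2

/-- For every node `v ∈ V_d` and every `a ∈ {0, 1, …, d}` there is at most
one node `u` with `{v, u} ∈ E_d` and `π_d(u, v) = a`. -/
theorem Gd_port_unique (d : ℕ) (hd : 2 ≤ d) (v : List Nd) (hv : Vd d v)
    (a : ℕ) (ha : a ≤ d) (u u' : List Nd)
    (hu : Ed d v u) (hu' : Ed d v u')
    (hπ : outPort u v = a) (hπ' : outPort u' v = a) :
    u = u' :=
  Gd_port_unique_general d v a u u' hu hu' hπ hπ'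

end Paper
end

section
/- Let v = (a₁,...,a_i) ∈ V_d with i < 2d. If i is odd, then for every a ∈ {1,...,d} there exists u ∈ V_d with {v,u} ∈ E_d and π_d(u,v) = a. If i is even, then either for all a ∈ {0,1,...,d−1} or for all a ∈ {0,1,...,d−2,d} there exists u ∈ V_d with {v,u} ∈ E_d and π_d(u,v) = a; moreover, in the even case, if π_d(u,v) = d then u is the parent of v. -/
namespace Paper

/-!
At a node whose last pair is `(b₁, b₂)`, the parent points to the node through port `b₁`, and the
children point back through the ports `nthAvoid lo b₁ j`, `j = 1, …, d - 1`, which enumerate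
`{lo, …, lo + d - 1} \ {b₁}` (`lo = 1` at odd nodes, `lo = 0` at even ones). At an odd node
`1 ≤ b₁ ≤ d`, so together they realise all of `{1, …, d}`. At an even node the same gives
`{0, …, d - 1}` when `b₁ < d`, while for `b₁ = d` the children give `{0, …, d - 2}` and the parent
gives `d`. Children of an even node point back through ports `< d`, so only the parent uses `d`.
-/

lemma nthAvoid_le (lo f j : ℕ) : nthAvoid lo f j ≤ lo + j := by
  unfold nthAvoid; split <;> omega

lemma nthAvoid_eq_of_lt {lo f j a : ℕ} (hj : lo + j = a + 1) (h : a < f) : nthAvoid lo f j = a := by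
  unfold nthAvoid; split <;> omega

lemma nthAvoid_eq_of_gt {lo f j a : ℕ} (hj : lo + j = a) (hf : lo ≤ f) (h : f < a) :
    nthAvoid lo f j = a := by
  unfold nthAvoid; split <;> omega

lemma odd_length_cons_iff {α : Type*} (x : α) (l : List α) :
    Odd (x :: l).length ↔ ¬Odd l.length := by
  rw [List.length_cons, Nat.odd_add_one]

lemma outPort_child (c : Nd) (v : List Nd) : outPort (c :: v) v = c.2 := by
  simp only [outPort, List.length_cons, List.headI]
  rw [if_neg (by omega)]

lemma outPort_parent (c : Nd) (v : List Nd) : outPort v (c :: v) = c.1 := by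
  simp [outPort]

def HasIncomingPort (d : ℕ) (v : List Nd) (a : ℕ) : Prop :=
  ∃ u, Ed d v u ∧ outPort u v = a

namespace Vd

variable {d : ℕ} {c : Nd} {v : List Nd}

lemma tail (h : Vd d (c :: v)) : Vd d v := by
  cases h with
  | base => exact nil
  | odd _ _ _ hv => exact hv
  | even _ _ _ hv => exact hv

lemma head_fst_mem (h : Vd d (c :: v)) : 1 ≤ c.1 ∧ c.1 ≤ d := by
  cases h with
  | base _ h1 h2 => exact ⟨h1, h2⟩
  | odd _ _ _ _ _ _ _ hj1 hj2 | even _ _ _ _ _ _ _ hj1 hj2 =>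
    dsimp only; unfold nthAvoid; constructor <;> split <;> omega

lemma head_snd_lt_of_odd (h : Vd d (c :: v)) (hodd : Odd (c :: v).length) : c.2 < d := by
  cases h with
  | base _ h1 h2 => dsimp only; omega
  | odd _ _ _ _ hodd' => exact absurd hodd' ((odd_length_cons_iff _ _).mp hodd)
  | even b₁ _ _ _ _ _ j _ hj2 =>
    have := nthAvoid_le 0 b₁ j
    dsimp only
    omega

lemma hasIncomingPort_child {a : ℕ} (h : Vd d (c :: v)) (hc : c.2 = a) :
    HasIncomingPort d v a :=
  ⟨c :: v, ⟨h.tail, h, c, Or.inl rfl⟩, (outPort_child c v).trans hc⟩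

lemma hasIncomingPort_parent (h : Vd d (c :: v)) : HasIncomingPort d (c :: v) c.1 :=
  ⟨v, ⟨h, h.tail, c, Or.inr rfl⟩, outPort_parent c v⟩

variable {b₁ b₂ : ℕ} {rest : List Nd} {a : ℕ}

lemma hasIncomingPort_of_odd (hv : Vd d ((b₁, b₂) :: rest))
    (hodd : Odd ((b₁, b₂) :: rest).length) (hlen : ((b₁, b₂) :: rest).length < 2 * d)
    (ha : 1 ≤ a) (had : a ≤ d) : HasIncomingPort d ((b₁, b₂) :: rest) a := by
  obtain ⟨hb₁, hb₁d⟩ := hv.head_fst_mem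
  rcases lt_trichotomy a b₁ with hlt | rfl | hgt
  · exact (hv.odd b₁ b₂ rest hodd hlen a ha (by omega)).hasIncomingPort_child
      (nthAvoid_eq_of_lt (by omega) hlt)
  · exact hv.hasIncomingPort_parent
  · exact (hv.odd b₁ b₂ rest hodd hlen (a - 1) (by omega) (by omega)).hasIncomingPort_child
      (nthAvoid_eq_of_gt (by omega) hb₁ hgt)

lemma hasIncomingPort_of_even (hv : Vd d ((b₁, b₂) :: rest))
    (heven : Even ((b₁, b₂) :: rest).length) (hlen : ((b₁, b₂) :: rest).length < 2 * d)
    (had : a < d) (hgap : a + 1 < d ∨ b₁ < d) : HasIncomingPort d ((b₁, b₂) :: rest) a := by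
  rcases lt_trichotomy a b₁ with hlt | rfl | hgt
  · exact (hv.even b₁ b₂ rest heven hlen (a + 1) (by omega) (by omega)).hasIncomingPort_child
      (nthAvoid_eq_of_lt (by omega) hlt)
  · exact hv.hasIncomingPort_parent
  · exact (hv.even b₁ b₂ rest heven hlen a (by omega) (by omega)).hasIncomingPort_child
      (nthAvoid_eq_of_gt (by omega) (Nat.zero_le b₁) hgt)

end Vd

lemma hasIncomingPort_nil {d a : ℕ} (ha : a < d) : HasIncomingPort d [] a :=
  (Vd.base (a + 1) (by omega) ha).hasIncomingPort_child (Nat.add_sub_cancel a 1)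

lemma Ed.eq_cons_of_outPort_eq {d : ℕ} {v u : List Nd} (h : Ed d v u) (heven : Even v.length)
    (hport : outPort u v = d) : ∃ b : Nd, v = b :: u := by
  obtain ⟨-, hu, c, rfl | rfl⟩ := h
  · have := hu.head_snd_lt_of_odd ((odd_length_cons_iff c v).mpr (Nat.not_odd_iff_even.mpr heven))
    rw [outPort_child] at hport
    omega
  · exact ⟨c, rfl⟩

theorem Gd_port_exists_general (d : ℕ) (v : List Nd) (hv : Vd d v)
    (hlen : v.length < 2 * d) :
    (Odd v.length →
      ∀ a, 1 ≤ a → a ≤ d → ∃ u, Ed d v u ∧ outPort u v = a) ∧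
    (Even v.length →
      ((∀ a, a ≤ d - 1 → ∃ u, Ed d v u ∧ outPort u v = a) ∨
        (∀ a, (a ≤ d - 2 ∨ a = d) → ∃ u, Ed d v u ∧ outPort u v = a)) ∧
      (∀ u, Ed d v u → outPort u v = d → ∃ b : Nd, v = b :: u)) := by
  refine ⟨fun hodd a ha had => ?_, fun heven => ⟨?_, fun u hu => hu.eq_cons_of_outPort_eq heven⟩⟩
  · obtain _ | ⟨⟨b₁, b₂⟩, rest⟩ := v
    · simp at hodd
    · exact hv.hasIncomingPort_of_odd hodd hlen ha had
  · obtain _ | ⟨⟨b₁, b₂⟩, rest⟩ := v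
    · exact .inl fun a ha => hasIncomingPort_nil (by simp at hlen; omega)
    · obtain ⟨-, hb₁d⟩ := hv.head_fst_mem
      by_cases hbd : b₁ = d
      · have hd : 2 ≤ d := by
          have hrest : rest.length ≠ 0 := fun h => by simp [h] at heven
          simp only [List.length_cons] at hlen
          omega
        refine .inr fun a ha => ?_
        rcases ha with ha | rfl
        · exact hv.hasIncomingPort_of_even heven hlen (by omega) (.inl (by omega))
        · exact hbd ▸ hv.hasIncomingPort_parent
      · exact .inl fun a ha => hv.hasIncomingPort_of_even heven hlen (by omega) (.inr (by omega))

/-- Existence of incoming port numbers at a node `v = (a₁, …, a_i)` of `G_d`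
with `i < 2d`: if `i` is odd, every `a ∈ {1, …, d}` is realised by a
neighbour; if `i` is even, either all of `{0, …, d−1}` or all of
`{0, …, d−2, d}` are realised, and in the even case a neighbour `u` with
`π_d(u, v) = d` is the parent of `v`. -/
theorem Gd_port_exists (d : ℕ) (hd : 2 ≤ d) (v : List Nd) (hv : Vd d v)
    (hlen : v.length < 2 * d) :
    (Odd v.length →
      ∀ a, 1 ≤ a → a ≤ d → ∃ u, Ed d v u ∧ outPort u v = a) ∧
    (Even v.length →
      ((∀ a, a ≤ d - 1 → ∃ u, Ed d v u ∧ outPort u v = a) ∨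
        (∀ a, (a ≤ d - 2 ∨ a = d) → ∃ u, Ed d v u ∧ outPort u v = a)) ∧
      (∀ u, Ed d v u → outPort u v = d → ∃ b : Nd, v = b :: u)) :=
  Gd_port_exists_general d v hv hlen

end Paper
end

section
/- Let (v̄₁, v̄₂), where v̄_i = (v₀^i, v₁^i, ..., v_k^i) for i = 1,2, be a critical pair of separating walks in G_d. Then v_{k−1}^i ∈ V_d \ V_{d−1} for some i ∈ {1,2}. -/
/-!
A node of odd length sees every port in `{1, …, d}` from its neighbours; a node of even
length sees `{0, …, d - 1}`, unless its last pair starts with `d`, in which case it sees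
`{0, …, d - 2} ∪ {d}`. Both walks of a PCW of length `k` end at nodes whose length has the
parity of `k + 1`, so separation is only possible at even length, and only if exactly one
of the two last pairs starts with `d`. When both previous nodes lie in `V_{d-1}`, the last
pair of the next node starts with `d` exactly when the port of the last step is `d`, and
these ports agree by compatibility.
-/

namespace Paper

lemma nthAvoid_of_lt {lo f j : ℕ} (h : lo + j - 1 < f) : nthAvoid lo f j = lo + j - 1 :=
  if_pos (Or.inl h)

lemma nthAvoid_of_le {lo f j : ℕ} (hf : lo ≤ f) (h : f < lo + j) : nthAvoid lo f j = lo + j :=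
  if_neg (by omega)

lemma nthAvoid_eq_iff {lo f j m : ℕ} (hf : lo ≤ f) (hfm : f < m) :
    nthAvoid lo f j = m ↔ lo + j = m := by
  unfold nthAvoid; split <;> omega

lemma insert_image_nthAvoid {lo f n : ℕ} (hf : f ∈ Set.Icc lo (lo + n)) :
    insert f (nthAvoid lo f '' Set.Icc 1 n) = Set.Icc lo (lo + n) := by
  ext p
  simp only [Set.mem_insert_iff, Set.mem_image, Set.mem_Icc] at hf ⊢
  constructor
  · rintro (rfl | ⟨j, hj, rfl⟩)
    · exact hf
    · unfold nthAvoid; split <;> omega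
  · intro hp
    rcases lt_trichotomy p f with hlt | rfl | hgt
    · exact Or.inr ⟨p - lo + 1, by omega, by rw [nthAvoid_of_lt] <;> omega⟩
    · exact Or.inl rfl
    · exact Or.inr ⟨p - lo, by omega, by rw [nthAvoid_of_le] <;> omega⟩

lemma image_nthAvoid_of_le {lo f n : ℕ} (h : lo + n ≤ f) :
    nthAvoid lo f '' Set.Icc 1 n = Set.Ico lo (lo + n) := by
  ext p
  simp only [Set.mem_image, Set.mem_Icc, Set.mem_Ico]
  constructor
  · rintro ⟨j, hj, rfl⟩
    rw [nthAvoid_of_lt (by omega)]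
    omega
  · intro hp
    exact ⟨p - lo + 1, by omega, by rw [nthAvoid_of_lt] <;> omega⟩

/-- The `j`-th child label `a_{i+1}^j` below a node of length `n` whose last pair is `b`
(rules (G3) and (G4)). -/
def childPair (n : ℕ) (b : Nd) (j : ℕ) : Nd :=
  if Even n then (nthAvoid 1 b.2 j, nthAvoid 0 b.1 j)
  else (nthAvoid 1 (bplus b.2) j, nthAvoid 1 b.1 j)

lemma childPair_snd (n : ℕ) (b : Nd) (j : ℕ) :
    (childPair n b j).2 = nthAvoid (if Even n then 0 else 1) b.1 j := by
  unfold childPair; split_ifs <;> rfl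

namespace Vd

variable {d : ℕ}

lemma of_cons {a : Nd} {l : List Nd} (h : Vd d (a :: l)) : Vd d l := by
  cases h with
  | base => exact Vd.nil
  | odd _ _ _ hv => exact hv
  | even _ _ _ hv => exact hv

lemma bounds_of_mem {l : List Nd} (h : Vd d l) {p : Nd} (hp : p ∈ l) :
    1 ≤ p.1 ∧ p.1 ≤ d ∧ p.2 ≤ d := by
  induction h with
  | nil => simp at hp
  | base _ h1 h2 =>
    obtain rfl := List.mem_singleton.1 hp
    exact ⟨h1, h2, by omega⟩
  | odd _ _ _ _ _ _ j _ _ ih | even _ _ _ _ _ _ j _ _ ih =>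
    rcases List.mem_cons.1 hp with rfl | hp
    · refine ⟨?_, ?_, ?_⟩ <;> (dsimp only; unfold nthAvoid; split <;> omega)
    · exact ih hp

lemma headI_fst_le {l : List Nd} (h : Vd d l) : l.headI.1 ≤ d := by
  rcases l with _ | ⟨a, l⟩
  · exact Nat.zero_le d
  · exact (h.bounds_of_mem List.mem_cons_self).2.1

lemma cons_cons_iff {c b : Nd} {t : List Nd} :
    Vd d (c :: b :: t) ↔ Vd d (b :: t) ∧ (b :: t).length < 2 * d ∧
      ∃ j ∈ Set.Icc 1 (d - 1), c = childPair (b :: t).length b j := by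
  constructor
  · intro h
    cases h with
    | odd _ _ _ hv hodd hlt j hj1 hj2 =>
      exact ⟨hv, hlt, j, ⟨hj1, hj2⟩,
        by rw [childPair, if_neg (Nat.not_even_iff_odd.2 hodd)]⟩
    | even _ _ _ hv heven hlt j hj1 hj2 =>
      exact ⟨hv, hlt, j, ⟨hj1, hj2⟩, by rw [childPair, if_pos heven]⟩
  · rintro ⟨hv, hlt, j, ⟨hj1, hj2⟩, rfl⟩
    obtain ⟨b₁, b₂⟩ := b
    unfold childPair
    split_ifs with he
    · exact Vd.even b₁ b₂ t hv he hlt j hj1 hj2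
    · exact Vd.odd b₁ b₂ t hv (Nat.not_even_iff_odd.1 he) hlt j hj1 hj2

end Vd

lemma Ed.length_eq {d : ℕ} {v u : List Nd} (h : Ed d v u) :
    u.length = v.length + 1 ∨ v.length = u.length + 1 := by
  obtain ⟨-, -, a, rfl | rfl⟩ := h
  · exact Or.inl rfl
  · exact Or.inr rfl

lemma outPort_cons_self_s9 (a : Nd) (l : List Nd) : outPort (a :: l) l = a.2 :=
  if_neg (by simp only [List.length_cons]; omega)

lemma outPort_self_cons_s9 (a : Nd) (l : List Nd) : outPort l (a :: l) = a.1 :=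
  if_pos rfl

def neighbourPorts (d : ℕ) (v : List Nd) : Set ℕ :=
  {p | ∃ y, Ed d v y ∧ outPort y v = p}

def childPorts (d : ℕ) (v : List Nd) : Set ℕ :=
  {p | ∃ c, Vd d (c :: v) ∧ c.2 = p}

lemma neighbourPorts_nil {d : ℕ} (hd : 0 < d) : neighbourPorts d [] = Set.Icc 0 (d - 1) := by
  ext p
  constructor
  · rintro ⟨y, ⟨-, hy, a, rfl | h⟩, rfl⟩
    · cases hy with
      | base _ h1 h2 => simp only [outPort_cons_self_s9, Set.mem_Icc]; omega
    · cases h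
  · intro hp
    have hy : Vd d [(p + 1, p)] := by
      simpa using Vd.base (d := d) (p + 1) (by omega) (by simp at hp; omega)
    exact ⟨_, ⟨Vd.nil, hy, _, Or.inl rfl⟩, outPort_cons_self_s9 _ _⟩

lemma neighbourPorts_cons {d : ℕ} {b : Nd} {t : List Nd} (hv : Vd d (b :: t)) :
    neighbourPorts d (b :: t) = insert b.1 (childPorts d (b :: t)) := by
  ext p
  simp only [neighbourPorts, childPorts, Ed, Set.mem_ofPred_eq, Set.mem_insert_iff]
  constructor
  · rintro ⟨y, ⟨-, hy, a, rfl | h⟩, rfl⟩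
    · exact Or.inr ⟨a, hy, (outPort_cons_self_s9 a _).symm⟩
    · obtain ⟨rfl, rfl⟩ := List.cons.inj h
      exact Or.inl (outPort_self_cons_s9 _ _)
  · rintro (rfl | ⟨c, hc, rfl⟩)
    · exact ⟨t, ⟨hv, hv.of_cons, b, Or.inr rfl⟩, outPort_self_cons_s9 b t⟩
    · exact ⟨c :: b :: t, ⟨hv, hc, c, Or.inl rfl⟩, outPort_cons_self_s9 c _⟩

lemma childPorts_eq_image {d : ℕ} {b : Nd} {t : List Nd} (hv : Vd d (b :: t))
    (hlen : (b :: t).length < 2 * d) :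
    childPorts d (b :: t) =
      nthAvoid (if Even (b :: t).length then 0 else 1) b.1 '' Set.Icc 1 (d - 1) := by
  ext p
  simp only [childPorts, Set.mem_ofPred_eq, Set.mem_image, Vd.cons_cons_iff]
  constructor
  · rintro ⟨c, ⟨-, -, j, hj, rfl⟩, rfl⟩
    exact ⟨j, hj, (childPair_snd _ _ _).symm⟩
  · rintro ⟨j, hj, rfl⟩
    exact ⟨_, ⟨hv, hlen, j, hj, rfl⟩, childPair_snd _ _ _⟩

def portProfile (d : ℕ) (v : List Nd) : Set ℕ :=
  if Even v.length then
    if v.headI.1 = d then insert d (Set.Ico 0 (d - 1)) else Set.Icc 0 (d - 1)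
  else Set.Icc 1 d

lemma neighbourPorts_eq_portProfile {d : ℕ} {v : List Nd} (hd : 0 < d) (hv : Vd d v)
    (hlen : v.length < 2 * d) : neighbourPorts d v = portProfile d v := by
  rcases v with _ | ⟨b, t⟩
  · rw [neighbourPorts_nil hd, portProfile, if_pos (by simp),
      if_neg (show ([] : List Nd).headI.1 ≠ d from hd.ne)]
  obtain ⟨hb₁, hbd, -⟩ := hv.bounds_of_mem List.mem_cons_self
  rw [neighbourPorts_cons hv, childPorts_eq_image hv hlen, portProfile, List.headI_cons]
  by_cases he : Even (b :: t).length
  · simp only [if_pos he]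
    by_cases hb : b.1 = d
    · rw [if_pos hb, image_nthAvoid_of_le (by omega), hb, zero_add]
    · rw [if_neg hb, insert_image_nthAvoid ⟨by omega, by omega⟩, zero_add]
  · simp only [if_neg he]
    rw [insert_image_nthAvoid ⟨hb₁, by omega⟩, Nat.add_sub_cancel' hd]

lemma portProfile_congr {d : ℕ} {v v' : List Nd} (hpar : v.length % 2 = v'.length % 2)
    (hhead : Even v.length → (v.headI.1 = d ↔ v'.headI.1 = d)) :
    portProfile d v = portProfile d v' := by
  have hpar' : Even v.length ↔ Even v'.length := by simp only [Nat.even_iff, hpar]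
  unfold portProfile
  by_cases he : Even v.length
  · simp only [he, hpar'.1 he, hhead he, if_true]
  · simp only [he, mt hpar'.2 he, if_false]

/-- Below a node of `V_{d-1}` of odd length both entries of the `j`-th child label avoid a
value `≤ d - 1`, so each of them equals `d` exactly when `j = d - 1`. -/
lemma outPort_eq_iff_headI_fst_eq {d : ℕ} {w v : List Nd} (hw : Vd (d - 1) w)
    (hodd : Odd w.length) (hE : Ed d w v) : outPort v w = d ↔ v.headI.1 = d := by
  obtain ⟨-, hv, a, rfl | rfl⟩ := hE
  · rcases w with _ | ⟨b, t⟩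
    · simp at hodd
    obtain ⟨-, -, j, -, rfl⟩ := Vd.cons_cons_iff.1 hv
    obtain ⟨hb₁, hb₁d, hb₂d⟩ := hw.bounds_of_mem List.mem_cons_self
    have hbplus : 1 ≤ bplus b.2 ∧ bplus b.2 ≤ d - 1 := by unfold bplus; split <;> omega
    rw [outPort_cons_self_s9, List.headI_cons, childPair, if_neg (Nat.not_even_iff_odd.2 hodd),
      nthAvoid_eq_iff hb₁ (by omega), nthAvoid_eq_iff hbplus.1 (by omega)]
  · have ha := (hw.bounds_of_mem List.mem_cons_self).2.1
    have hhead := hw.of_cons.headI_fst_le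
    rw [outPort_self_cons_s9]
    omega

lemma length_le_and_mod_two_of_walk {d k : ℕ} {w : ℕ → List Nd} (h0 : (w 0).length = 1)
    (hw : ∀ j < k, Ed d (w j) (w (j + 1))) :
    ∀ j ≤ k, (w j).length ≤ j + 1 ∧ (w j).length % 2 = (j + 1) % 2 := by
  intro j hj
  induction j with
  | zero => omega
  | succ n ih =>
    have := ih (by omega)
    have := (hw n (by omega)).length_eq
    omega

lemma Vd.of_walk {d k : ℕ} {w : ℕ → List Nd} (h0 : Vd d (w 0))
    (hw : ∀ j < k, Ed d (w j) (w (j + 1))) : Vd d (w k) := by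
  rcases k with _ | k
  · exact h0
  · exact (hw k (Nat.lt_add_one k)).2.1

/-- In a critical PSW in `G_d`, the second-to-last node of one of the walks
lies in `V_d \ V_{d−1}`. -/
theorem criticalPSW_new_node (d k : ℕ) (hd : 2 ≤ d) (w₁ w₂ : ℕ → List Nd)
    (h : IsCriticalPSW d k w₁ w₂) :
    ¬ Vd (d - 1) (w₁ (k - 1)) ∨ ¬ Vd (d - 1) (w₂ (k - 1)) := by
  by_contra! hprev
  obtain ⟨⟨hw, x, hx, hsep⟩, -⟩ := h
  have hlen₁ := length_le_and_mod_two_of_walk (by rw [hw.start₁]; rfl) hw.walk₁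
  have hlen₂ := length_le_and_mod_two_of_walk (by rw [hw.start₂]; rfl) hw.walk₂
  obtain ⟨hk₁, hpar₁⟩ := hlen₁ k le_rfl
  obtain ⟨hk₂, hpar₂⟩ := hlen₂ k le_rfl
  have hk := hw.klen
  have hv₂ : Vd d (w₂ k) :=
    Vd.of_walk (by rw [hw.start₂]; exact Vd.base 2 (by omega) hd) hw.walk₂
  have hprofile : portProfile d (w₁ k) = portProfile d (w₂ k) := by
    refine portProfile_congr (by omega) fun heven => ?_
    have hn := Nat.even_iff.1 heven
    obtain ⟨n, rfl⟩ : ∃ n, k = n + 1 := ⟨k - 1, by omega⟩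
    have hodd₁ : Odd (w₁ n).length := Nat.odd_iff.2 (by have := hlen₁ n (by omega); omega)
    have hodd₂ : Odd (w₂ n).length := Nat.odd_iff.2 (by have := hlen₂ n (by omega); omega)
    have hport := hw.compat (n + 1) (by omega) le_rfl
    rw [Nat.add_sub_cancel] at hport hprev
    rw [← outPort_eq_iff_headI_fst_eq hprev.1 hodd₁ (hw.walk₁ n (by omega)),
      ← outPort_eq_iff_headI_fst_eq hprev.2 hodd₂ (hw.walk₂ n (by omega)),
      hport]
  obtain ⟨y, hy, hxy⟩ : outPort x (w₁ k) ∈ neighbourPorts d (w₂ k) := by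
    rw [neighbourPorts_eq_portProfile (by omega) hv₂ (by omega), ← hprofile,
      ← neighbourPorts_eq_portProfile (by omega) hx.1 (by omega)]
    exact ⟨x, hx, rfl⟩
  exact hsep y hy hxy.symm

end Paper
end
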